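/- For 1 < k < n−1, the quantity Σ_{ℓ=0}^{k'−1} ( W(ℓ,n,m+1)/(n−1) − W(ℓ,n−1,m+1) ) · A(m, k'−ℓ−1) is strictly positive for all 1 ≤ m ≤ n−1, where k' = n−k. -/

import Mathlib

noncomputable section

open Finset

/-- The weight of a linearly ordered block (given as a list): the number of its
elements smaller than its first element. -/
def blockWeight (b : List ℕ) : ℕ := (b.filter (fun x => x < b.headI)).length

/-- `P` is a partition of `{1,…,n}` into linearly ordered blocks (nonempty lists
of distinct elements, pairwise disjoint, whose union is `{1,…,n}`). -/
def IsOrderedPartition (n : ℕ) (P : Finset (List ℕ)) : Prop :=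
  (∀ b ∈ P, b ≠ [] ∧ b.Nodup) ∧
  (∀ b₁ ∈ P, ∀ b₂ ∈ P, b₁ ≠ b₂ → ∀ x, x ∈ b₁ → x ∉ b₂) ∧
  (∀ x : ℕ, (∃ b ∈ P, x ∈ b) ↔ x ∈ Finset.Icc 1 n)

/-- The weight of an ordered partition: the sum of the weights of its blocks. -/
def partitionWeight (P : Finset (List ℕ)) : ℕ := ∑ b ∈ P, blockWeight b

/-- The weighted Lah number `W(ℓ,n,m)`: the number of partitions of `{1,…,n}`
into exactly `m` linearly ordered blocks with total weight `ℓ`.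
(It vanishes for `ℓ < 0`.) -/
def weightedLah (ℓ : ℤ) (n m : ℕ) : ℕ :=
  Set.ncard {P : Finset (List ℕ) |
    IsOrderedPartition n P ∧ P.card = m ∧ (partitionWeight P : ℤ) = ℓ}

/-- The number of cycles of a permutation of `Fin n` (fixed points count as cycles). -/
def numCycles {n : ℕ} (σ : Equiv.Perm (Fin n)) : ℕ :=
  Multiset.card σ.cycleType + (n - σ.cycleType.sum)

/-- The unsigned Stirling number of the first kind: the number of permutations of
`n` elements with exactly `m` cycles. -/
def stirlingFirst (n m : ℕ) : ℕ :=
  Nat.card {σ : Equiv.Perm (Fin n) // numCycles σ = m}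

/-- The number of descents of a permutation of `Fin m`. -/
def descentCount (m : ℕ) (σ : Equiv.Perm (Fin m)) : ℕ :=
  ((Finset.range (m - 1)).filter (fun i =>
    ((List.ofFn (fun j => (σ j : ℕ))).getD (i + 1) 0) <
      ((List.ofFn (fun j => (σ j : ℕ))).getD i 0))).card

/-- The Eulerian number `A(m,j)`: permutations of `{1,…,m}` with exactly `j` descents. -/
def eulerian (m j : ℕ) : ℕ :=
  Nat.card {σ : Equiv.Perm (Fin m) // descentCount m σ = j}

/-- The coefficient `e_{k,n,m}` of the Ehrhart polynomial of the hypersimplex. -/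
def eCoef (k n m : ℕ) : ℚ :=
  (1 / (n - 1).factorial : ℚ) *
    ∑ ℓ ∈ Finset.range k, (weightedLah ℓ n (m + 1) : ℚ) * (eulerian m (k - ℓ - 1) : ℚ)

/-- Number of lattice points of the `t`-th dilate of the hypersimplex `Δ_{k,n}`,
i.e. points of `{0,…,t}^n` with coordinate sum `k·t`. -/
def hyperCount (k n t : ℕ) : ℕ :=
  Nat.card {x : Fin n → ℤ // (∀ i, 0 ≤ x i ∧ x i ≤ (t : ℤ)) ∧ ∑ i, x i = (k : ℤ) * t}

/-- Number of lattice points of the `t`-th dilate of the half-open hypersimplex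
`Δ'_{k,n} ⊆ ℝ^{n-1}` (for `k > 1`). -/
def halfOpenCount (k n t : ℕ) : ℕ :=
  Nat.card {x : Fin (n - 1) → ℤ // (∀ i, 0 ≤ x i ∧ x i ≤ (t : ℤ)) ∧
    ((k : ℤ) - 1) * t < ∑ i, x i ∧ ∑ i, x i ≤ (k : ℤ) * t}

/-- Number of lattice points of the `t`-th dilate of the independence polytope of
`U_{k,n}`, i.e. points of `{0,…,t}^n` with coordinate sum at most `k·t`. -/
def indepCount (k n t : ℕ) : ℕ :=
  Nat.card {x : Fin n → ℤ // (∀ i, 0 ≤ x i ∧ x i ≤ (t : ℤ)) ∧ ∑ i, x i ≤ (k : ℤ) * t}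

/-- Number of lattice points of a region `S ⊆ ℝ^d`. -/
def latticeCount {d : ℕ} (S : Set (Fin d → ℝ)) : ℕ :=
  Nat.card {x : Fin d → ℤ // (fun i => (x i : ℝ)) ∈ S}


/-!
Adding `N + 1` to an ordered partition of `{1,…,N}` into `m + 1` blocks right after one of its
`N` elements, or to one into `m` blocks as a new singleton block, gives pairwise distinct
ordered partitions of `{1,…,N+1}` into `m + 1` blocks, of unchanged weight. Hence
`N * W(ℓ,N,m+1) + W(ℓ,N,m) ≤ W(ℓ,N+1,m+1)`, so with `n = N + 1` the summand of index `ℓ` is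
at least `W(ℓ,n-1,m) / (n-1) * A(m,k'-ℓ-1) ≥ 0`. For `ℓ = k' - m` (truncated at `0`) this bound
is positive: `ℓ + m ≤ n - 1` makes `W(ℓ,n-1,m)` positive (grow the single block
`[ℓ+1, 1, …, ℓ]` by the same two operations), and `k' - ℓ - 1 < m` makes the Eulerian number
positive.
-/

namespace List

variable {α : Type*} [DecidableEq α]

theorem erase_insertIdx_of_notMem {a : α} :
    ∀ {l : List α} {i : ℕ}, a ∉ l → (l.insertIdx i a).erase a = l
  | _, 0, _ => by simp
  | [], _ + 1, _ => by simp
  | b :: l, i + 1, h => by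
    rw [mem_cons, not_or] at h
    rw [insertIdx_succ_cons, erase_cons_tail (by simpa using Ne.symm h.1),
      erase_insertIdx_of_notMem h.2]

theorem finite_setOf_nodup_subset (s : Finset α) :
    {l : List α | l.Nodup ∧ ∀ x ∈ l, x ∈ s}.Finite := by
  refine (s.powerset.biUnion fun t => t.val.lists.toFinset).finite_toSet.subset ?_
  rintro l ⟨hl, hs⟩
  simp only [Finset.coe_biUnion, Finset.mem_coe, Finset.mem_powerset, Set.mem_iUnion,
    Multiset.mem_toFinset, Multiset.mem_lists_iff, exists_prop]
  exact ⟨l.toFinset, fun x hx => hs x (List.mem_toFinset.1 hx), by simp [hl.dedup]⟩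

end List

def insertAfter {α : Type*} [DecidableEq α] (x a : α) (l : List α) : List α :=
  if x ∈ l then l.insertIdx (l.idxOf x + 1) a else l

section insertAfter

variable {α : Type*} [DecidableEq α] {x x' a y : α} {l : List α}

theorem mem_insertAfter : y ∈ insertAfter x a l ↔ y ∈ l ∨ y = a ∧ x ∈ l := by
  unfold insertAfter
  split_ifs with h
  · rw [List.mem_insertIdx (List.idxOf_lt_length_iff.2 h)]
    tauto
  · tauto

theorem erase_insertAfter (ha : a ∉ l) : (insertAfter x a l).erase a = l := by
  unfold insertAfter
  split_ifs
  · exact List.erase_insertIdx_of_notMem ha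
  · exact List.erase_of_not_mem ha

theorem insertAfter_ne_nil (hl : l ≠ []) : insertAfter x a l ≠ [] :=
  List.ne_nil_of_mem (mem_insertAfter.2 (Or.inl (List.head_mem hl)))

theorem List.Nodup.insertAfter (hl : l.Nodup) (ha : a ∉ l) : (insertAfter x a l).Nodup := by
  unfold _root_.insertAfter
  split_ifs with h
  · exact (List.perm_insertIdx a l (List.idxOf_lt_length_iff.2 h)).nodup_iff.2 (hl.cons ha)
  · exact hl

theorem insertAfter_left_inj (ha : a ∉ l) (hx : x ∈ l) (hx' : x' ∈ l) :
    insertAfter x a l = insertAfter x' a l ↔ x = x' := by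
  refine ⟨fun h => ?_, fun h => h ▸ rfl⟩
  rw [insertAfter, insertAfter, if_pos hx, if_pos hx'] at h
  have := List.injOn_insertIdx_index_of_notMem l a ha (List.idxOf_lt_length_iff.2 hx)
    (List.idxOf_lt_length_iff.2 hx') h
  exact (List.idxOf_inj hx).1 (Nat.succ_injective this)

end insertAfter

theorem blockWeight_cons (b : ℕ) (t : List ℕ) :
    blockWeight (b :: t) = (t.filter (· < b)).length := by
  simp only [blockWeight, List.headI_cons, List.filter_cons, lt_irrefl, decide_false]
  rfl

theorem blockWeight_insertAfter {x a : ℕ} {l : List ℕ} (ha : ∀ y ∈ l, y ≤ a) :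
    blockWeight (insertAfter x a l) = blockWeight l := by
  unfold insertAfter
  split_ifs with h
  · obtain ⟨b, t, rfl⟩ := List.exists_cons_of_ne_nil (List.ne_nil_of_mem h)
    have hi : (b :: t).idxOf x ≤ t.length := Nat.le_of_lt_succ (List.idxOf_lt_length_iff.2 h)
    rw [List.insertIdx_succ_cons, blockWeight_cons, blockWeight_cons,
      ((List.perm_insertIdx a t hi).filter _).length_eq,
      List.filter_cons_of_neg (by simpa using ha b List.mem_cons_self)]
  · rfl

theorem finite_setOf_isOrderedPartition (n : ℕ) : {P | IsOrderedPartition n P}.Finite := by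
  have hS := List.finite_setOf_nodup_subset (Icc 1 n)
  refine hS.toFinset.powerset.finite_toSet.subset fun P hP => ?_
  rw [mem_coe, mem_powerset]
  intro b hb
  rw [Set.Finite.mem_toFinset]
  exact ⟨(hP.1 b hb).2, fun x hx => (hP.2.2 x).1 ⟨b, hb, hx⟩⟩

namespace IsOrderedPartition

variable {N : ℕ} {P P' : Finset (List ℕ)} {b : List ℕ} {x x' y : ℕ}

theorem mem_Icc_of_mem (hP : IsOrderedPartition N P) (hb : b ∈ P) (hy : y ∈ b) :
    y ∈ Icc 1 N :=
  (hP.2.2 y).1 ⟨b, hb, hy⟩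

theorem le_of_mem (hP : IsOrderedPartition N P) (hb : b ∈ P) (hy : y ∈ b) : y ≤ N :=
  (Finset.mem_Icc.1 (hP.mem_Icc_of_mem hb hy)).2

theorem succ_notMem (hP : IsOrderedPartition N P) (hb : b ∈ P) : N + 1 ∉ b :=
  fun h => Nat.not_succ_le_self N (hP.le_of_mem hb h)

theorem insertAfter_injOn (hP : IsOrderedPartition N P) : Set.InjOn (insertAfter x (N + 1)) P :=
  fun b hb b' hb' h => by
    rw [← erase_insertAfter (x := x) (hP.succ_notMem hb), h,
      erase_insertAfter (hP.succ_notMem hb')]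

theorem image_insertAfter (hP : IsOrderedPartition N P) (hx : x ∈ Icc 1 N) :
    IsOrderedPartition (N + 1) (P.image (insertAfter x (N + 1))) := by
  obtain ⟨b₀, hb₀, hxb₀⟩ := (hP.2.2 x).2 hx
  refine ⟨?_, ?_, fun y => ⟨?_, fun hy => ?_⟩⟩
  · simp only [mem_image, forall_exists_index, and_imp, forall_apply_eq_imp_iff₂]
    exact fun b hb =>
      ⟨insertAfter_ne_nil (hP.1 b hb).1, (hP.1 b hb).2.insertAfter (hP.succ_notMem hb)⟩
  · simp only [mem_image, forall_exists_index, and_imp, forall_apply_eq_imp_iff₂]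
    intro b₁ hb₁ b₂ hb₂ hne y hy₁ hy₂
    rw [mem_insertAfter] at hy₁ hy₂
    have hb : b₁ ≠ b₂ := fun h => hne (h ▸ rfl)
    rcases hy₁ with h₁ | ⟨rfl, hx₁⟩ <;> rcases hy₂ with h₂ | ⟨h, hx₂⟩
    · exact hP.2.1 b₁ hb₁ b₂ hb₂ hb y h₁ h₂
    · exact hP.succ_notMem hb₁ (h ▸ h₁)
    · exact hP.succ_notMem hb₂ h₂
    · exact hP.2.1 b₁ hb₁ b₂ hb₂ hb x hx₁ hx₂
  · rintro ⟨c, hc, hyc⟩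
    obtain ⟨b, hb, rfl⟩ := mem_image.1 hc
    rcases mem_insertAfter.1 hyc with h | ⟨rfl, -⟩
    · have := mem_Icc.1 (hP.mem_Icc_of_mem hb h)
      exact mem_Icc.2 ⟨this.1, by omega⟩
    · simp
  · rcases (mem_Icc.1 hy).2.lt_or_eq with hyN | rfl
    · obtain ⟨b, hb, hyb⟩ := (hP.2.2 y).2 (mem_Icc.2 ⟨(mem_Icc.1 hy).1, by omega⟩)
      exact ⟨_, mem_image_of_mem _ hb, mem_insertAfter.2 (Or.inl hyb)⟩
    · exact ⟨_, mem_image_of_mem _ hb₀, mem_insertAfter.2 (Or.inr ⟨rfl, hxb₀⟩)⟩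

theorem card_image_insertAfter (hP : IsOrderedPartition N P) :
    (P.image (insertAfter x (N + 1))).card = P.card :=
  card_image_of_injOn hP.insertAfter_injOn

theorem partitionWeight_image_insertAfter (hP : IsOrderedPartition N P) :
    partitionWeight (P.image (insertAfter x (N + 1))) = partitionWeight P := by
  rw [partitionWeight, sum_image hP.insertAfter_injOn]
  exact sum_congr rfl fun b hb =>
    blockWeight_insertAfter fun y hy => (hP.le_of_mem hb hy).trans N.le_succ

theorem image_erase_image_insertAfter (hP : IsOrderedPartition N P) :
    (P.image (insertAfter x (N + 1))).image (·.erase (N + 1)) = P := by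
  rw [image_image]
  exact (image_congr (g := id) fun b hb => erase_insertAfter (hP.succ_notMem hb)).trans image_id

theorem image_insertAfter_inj (hP : IsOrderedPartition N P) (hP' : IsOrderedPartition N P')
    (hx : x ∈ Icc 1 N) (hx' : x' ∈ Icc 1 N)
    (h : P.image (insertAfter x (N + 1)) = P'.image (insertAfter x' (N + 1))) :
    P = P' ∧ x = x' := by
  obtain rfl : P = P' := by
    rw [← hP.image_erase_image_insertAfter (x := x), h, hP'.image_erase_image_insertAfter]
  refine ⟨rfl, ?_⟩
  obtain ⟨b, hb, hxb⟩ := (hP.2.2 x).2 hx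
  obtain ⟨b', hb', hxb'⟩ := (hP.2.2 x').2 hx'
  have hbb' : insertAfter x (N + 1) b = insertAfter x' (N + 1) b' := by
    by_contra hne
    exact (hP.image_insertAfter hx).2.1 _ (mem_image_of_mem _ hb) _
      (h ▸ mem_image_of_mem _ hb') hne (N + 1)
      (mem_insertAfter.2 (Or.inr ⟨rfl, hxb⟩)) (mem_insertAfter.2 (Or.inr ⟨rfl, hxb'⟩))
  obtain rfl : b = b' := by
    simpa only [erase_insertAfter (hP.succ_notMem hb), erase_insertAfter (hP.succ_notMem hb')]
      using congrArg (·.erase (N + 1)) hbb'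
  exact (insertAfter_left_inj (hP.succ_notMem hb) hxb hxb').1 hbb'

theorem singleton_notMem_image_insertAfter (hP : IsOrderedPartition N P) :
    [N + 1] ∉ P.image (insertAfter x (N + 1)) := by
  rintro hc
  obtain ⟨b, hb, hbe⟩ := mem_image.1 hc
  have := erase_insertAfter (x := x) (hP.succ_notMem hb)
  rw [hbe, List.erase_cons_head] at this
  exact (hP.1 b hb).1 this.symm

theorem singleton_notMem (hP : IsOrderedPartition N P) : [N + 1] ∉ P :=
  fun h => hP.succ_notMem h List.mem_cons_self

theorem insert_singleton (hP : IsOrderedPartition N P) :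
    IsOrderedPartition (N + 1) (insert [N + 1] P) := by
  refine ⟨?_, ?_, fun y => ⟨?_, fun hy => ?_⟩⟩
  · simp only [mem_insert, forall_eq_or_imp]
    exact ⟨by simp, hP.1⟩
  · intro b₁ hb₁ b₂ hb₂ hne y hy₁ hy₂
    rcases mem_insert.1 hb₁ with rfl | hb₁ <;> rcases mem_insert.1 hb₂ with rfl | hb₂
    · exact hne rfl
    · exact hP.succ_notMem hb₂ (List.mem_singleton.1 hy₁ ▸ hy₂)
    · exact hP.succ_notMem hb₁ (List.mem_singleton.1 hy₂ ▸ hy₁)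
    · exact hP.2.1 b₁ hb₁ b₂ hb₂ hne y hy₁ hy₂
  · rintro ⟨c, hc, hyc⟩
    rcases mem_insert.1 hc with rfl | hc
    · simp_all
    · have := mem_Icc.1 (hP.mem_Icc_of_mem hc hyc)
      exact mem_Icc.2 ⟨this.1, by omega⟩
  · rcases (mem_Icc.1 hy).2.lt_or_eq with hyN | rfl
    · obtain ⟨b, hb, hyb⟩ := (hP.2.2 y).2 (mem_Icc.2 ⟨(mem_Icc.1 hy).1, by omega⟩)
      exact ⟨b, mem_insert_of_mem hb, hyb⟩
    · exact ⟨_, mem_insert_self _ _, List.mem_singleton_self _⟩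

theorem partitionWeight_insert_singleton (hP : IsOrderedPartition N P) :
    partitionWeight (insert [N + 1] P) = partitionWeight P := by
  rw [partitionWeight, partitionWeight, sum_insert hP.singleton_notMem]
  simp [blockWeight]

end IsOrderedPartition

def weightedLahSet (ℓ n m : ℕ) : Set (Finset (List ℕ)) :=
  {P | IsOrderedPartition n P ∧ P.card = m ∧ partitionWeight P = ℓ}

theorem weightedLah_natCast (ℓ n m : ℕ) :
    weightedLah ℓ n m = (weightedLahSet ℓ n m).ncard := by
  simp only [weightedLah, weightedLahSet, Nat.cast_inj]

theorem weightedLahSet_finite (ℓ n m : ℕ) : (weightedLahSet ℓ n m).Finite :=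
  (finite_setOf_isOrderedPartition n).subset fun _ hP => hP.1

section weightedLahSet

variable {N m ℓ x : ℕ} {P : Finset (List ℕ)}

theorem image_insertAfter_mem_weightedLahSet (hP : P ∈ weightedLahSet ℓ N m)
    (hx : x ∈ Icc 1 N) :
    P.image (insertAfter x (N + 1)) ∈ weightedLahSet ℓ (N + 1) m :=
  ⟨hP.1.image_insertAfter hx, hP.1.card_image_insertAfter.trans hP.2.1,
    hP.1.partitionWeight_image_insertAfter.trans hP.2.2⟩

theorem insert_singleton_mem_weightedLahSet (hP : P ∈ weightedLahSet ℓ N m) :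
    insert [N + 1] P ∈ weightedLahSet ℓ (N + 1) (m + 1) :=
  ⟨hP.1.insert_singleton, (card_insert_of_notMem hP.1.singleton_notMem).trans (by rw [hP.2.1]),
    hP.1.partitionWeight_insert_singleton.trans hP.2.2⟩

end weightedLahSet

theorem le_weightedLah_succ (ℓ N m : ℕ) :
    N * weightedLah ℓ N (m + 1) + weightedLah ℓ N m ≤ weightedLah ℓ (N + 1) (m + 1) := by
  let f : (weightedLahSet ℓ N (m + 1) × Icc 1 N) ⊕ weightedLahSet ℓ N m →
      weightedLahSet ℓ (N + 1) (m + 1) :=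
    Sum.elim (fun p => ⟨_, image_insertAfter_mem_weightedLahSet p.1.2 p.2.2⟩)
      (fun P => ⟨_, insert_singleton_mem_weightedLahSet P.2⟩)
  have hf : Function.Injective f := by
    refine Function.Injective.sumElim ?_ ?_ ?_
    · rintro ⟨⟨P, hP⟩, ⟨x, hx⟩⟩ ⟨⟨P', hP'⟩, ⟨x', hx'⟩⟩ h
      obtain ⟨rfl, rfl⟩ := hP.1.image_insertAfter_inj hP'.1 hx hx' (congrArg Subtype.val h)
      rfl
    · rintro ⟨P, hP⟩ ⟨P', hP'⟩ h
      have h' : insert [N + 1] P = insert [N + 1] P' := congrArg Subtype.val h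
      have := congrArg (·.erase [N + 1]) h'
      simp only [erase_insert hP.1.singleton_notMem, erase_insert hP'.1.singleton_notMem] at this
      exact Subtype.ext this
    · rintro ⟨⟨P, hP⟩, ⟨x, hx⟩⟩ ⟨P', hP'⟩ h
      have h' : P.image (insertAfter x (N + 1)) = insert [N + 1] P' := congrArg Subtype.val h
      exact hP.1.singleton_notMem_image_insertAfter (h' ▸ mem_insert_self _ _)
  have := (weightedLahSet_finite ℓ N (m + 1)).to_subtype
  have := (weightedLahSet_finite ℓ N m).to_subtype
  have := (weightedLahSet_finite ℓ (N + 1) (m + 1)).to_subtype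
  have hcard := Nat.card_le_card_of_injective f hf
  rw [Nat.card_sum, Nat.card_prod, Nat.card_eq_fintype_card (α := Icc 1 N), Fintype.card_coe,
    Nat.card_Icc, Nat.add_sub_cancel, Nat.card_coe_set_eq, Nat.card_coe_set_eq,
    Nat.card_coe_set_eq] at hcard
  rw [weightedLah_natCast, weightedLah_natCast, weightedLah_natCast, mul_comm]
  exact hcard

theorem weightedLah_succ_one_pos (ℓ : ℕ) : 0 < weightedLah ℓ (ℓ + 1) 1 := by
  set B := (ℓ + 1) :: List.range' 1 ℓ
  have hB : ∀ x, x ∈ B ↔ x ∈ Icc 1 (ℓ + 1) := fun x => by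
    simp only [B, List.mem_cons, List.mem_range'_1, mem_Icc]
    omega
  have hP : {B} ∈ weightedLahSet ℓ (ℓ + 1) 1 := by
    refine ⟨⟨?_, ?_, ?_⟩, card_singleton B, ?_⟩
    · simp only [mem_singleton, forall_eq]
      exact ⟨List.cons_ne_nil _ _, List.nodup_cons.2 ⟨by simp; omega, List.nodup_range'⟩⟩
    · simp
    · simpa using hB
    · rw [partitionWeight, sum_singleton, blockWeight_cons,
        List.filter_eq_self.2 (fun x hx => by simp only [List.mem_range'_1] at hx; simp; omega),
        List.length_range']
  rw [weightedLah_natCast]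
  exact (Set.ncard_pos (weightedLahSet_finite _ _ _)).2 ⟨_, hP⟩

theorem weightedLah_pos {ℓ N m : ℕ} (hm : 1 ≤ m) (h : ℓ + m ≤ N) :
    0 < weightedLah ℓ N m := by
  induction N generalizing m with
  | zero => omega
  | succ N ih =>
    obtain ⟨m, rfl⟩ : ∃ m', m = m' + 1 := ⟨m - 1, by omega⟩
    have step := le_weightedLah_succ ℓ N m
    rcases Nat.eq_zero_or_pos m with rfl | hm
    · rcases h.eq_or_lt with h | h
      · obtain rfl : N = ℓ := by omega
        exact weightedLah_succ_one_pos _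
      · rw [zero_add] at step ⊢
        have := Nat.mul_pos (by omega : 0 < N) (ih le_rfl (by omega))
        omega
    · have := ih hm (by omega)
      omega

theorem eulerian_pos {m j : ℕ} (h : j < m) : 0 < eulerian m j := by
  -- reversing the first `j + 1` values leaves descents exactly at the positions `0, …, j - 1`
  let r : ℕ → ℕ := fun i => if i ≤ j then j - i else i
  have hr : ∀ i : Fin m, r i < m := fun i => by simp only [r]; split_ifs <;> omega
  have hinv : Function.Involutive fun i : Fin m => (⟨r i, hr i⟩ : Fin m) :=
    fun i => Fin.ext (by simp only [r]; split_ifs <;> omega)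
  let σ := hinv.toPerm
  have hσ : ∀ i (hi : i < m), (List.ofFn fun p => (σ p : ℕ)).getD i 0 = r i := fun i hi => by
    simp [List.getD_eq_getElem?_getD, hi, σ]
  have hdesc : descentCount m σ = j := by
    rw [descentCount, ← card_range j]
    congr 1
    ext i
    simp only [mem_filter, mem_range]
    constructor
    · rintro ⟨hi, hlt⟩
      rw [hσ _ (by omega), hσ _ (by omega)] at hlt
      simp only [r] at hlt
      split_ifs at hlt <;> omega
    · intro hi
      refine ⟨by omega, ?_⟩
      rw [hσ _ (by omega), hσ _ (by omega)]
      simp only [r]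
      split_ifs <;> omega
  have : Nonempty {σ : Equiv.Perm (Fin m) // descentCount m σ = j} := ⟨⟨σ, hdesc⟩⟩
  exact Nat.card_pos

theorem weightedLah_div_le_div_sub {N : ℕ} (hN : 0 < N) (ℓ m : ℕ) :
    (weightedLah ℓ N m : ℚ) / N ≤
      (weightedLah ℓ (N + 1) (m + 1) : ℚ) / N - weightedLah ℓ N (m + 1) := by
  have hN' : (0 : ℚ) < N := by exact_mod_cast hN
  have step : (N * weightedLah ℓ N (m + 1) + weightedLah ℓ N m : ℚ) ≤
      weightedLah ℓ (N + 1) (m + 1) := by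
    exact_mod_cast le_weightedLah_succ ℓ N m
  rw [le_sub_iff_add_le, div_add' _ _ _ hN'.ne', div_le_div_iff_of_pos_right hN']
  linarith

theorem key_sum_pos (k n m : ℕ) (hk : 1 < k) (hkn : k < n - 1)
    (hm : 1 ≤ m) (hmn : m ≤ n - 1) :
    0 < ∑ ℓ ∈ Finset.range (n - k),
      ((weightedLah (ℓ : ℤ) n (m + 1) : ℚ) / ((n : ℚ) - 1) -
          (weightedLah (ℓ : ℤ) (n - 1) (m + 1) : ℚ)) *
        (eulerian m (n - k - ℓ - 1) : ℚ) := by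
  obtain ⟨N, rfl⟩ : ∃ N, n = N + 1 := ⟨n - 1, by omega⟩
  have hN : 0 < N := by omega
  simp only [Nat.add_sub_cancel, Nat.cast_add, Nat.cast_one, add_sub_cancel_right]
  have hterm (ℓ : ℕ) := weightedLah_div_le_div_sub hN ℓ m
  refine sum_pos' (fun ℓ _ => mul_nonneg ?_ (Nat.cast_nonneg _))
    ⟨N + 1 - k - m, mem_range.2 (by omega), mul_pos ?_ ?_⟩
  · exact (div_nonneg (Nat.cast_nonneg _) (Nat.cast_nonneg _)).trans (hterm ℓ)
  · refine (div_pos ?_ (Nat.cast_pos.2 hN)).trans_le (hterm _)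
    exact_mod_cast weightedLah_pos hm (by omega)
  · exact_mod_cast eulerian_pos (by omega)
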